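/- arXiv:2312.02591 — 3 statements merged into one kernel-verified Lean document; each statement's English description precedes it below -/
import Mathlib

section
/- Under the stated geometric coefficient bounds there exists a finite constant C > 0, depending only on A, ρ₁, ρ₂ and ρ₃, such that sup_{θ∈Θ} sup_{n∈ℕ} λ^ξ_{n1}(θ) ≤ C; that is, the largest eigenvalue of the idiosyncratic spectral density matrix Σ^ξ_n(θ) is bounded uniformly over all dimensions n and all frequencies θ. -/
/-! Uniformly in `θ`, `‖b_{ℓj}(θ)‖ ≤ A_{ℓj} S` with `S = Σ_κ ρ₁^{|κ₁|} ρ₂^{|κ₂|} ρ₃^{κ₃} < ∞`.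
Hence the `k`-th absolute row sum of `Σ^ξ_n(θ)` is at most
`S² Σ_j A_{kj} Σ_ℓ A_{ℓj} ≤ (A S)²`, and by Gershgorin's circle theorem this bounds every
eigenvalue, whatever `n` and `θ`. -/

open Matrix ComplexOrder

noncomputable section

/-- The `j`-th largest eigenvalue (1-indexed) of a Hermitian complex matrix
(junk value otherwise). -/
def eigJ {n : ℕ} (A : Matrix (Fin n) (Fin n) ℂ) (j : ℕ) : ℝ :=
  if hA : A.IsHermitian then
    ((Finset.univ.val.map hA.eigenvalues).sort (· ≤ ·)).getD (n - j) 0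
  else 0

/-- Inner product of `κ ∈ ℤ×ℤ×ℕ₀` with a frequency `θ`. -/
def kdot (κ : ℤ × ℤ × ℕ) (θ : Fin 3 → ℝ) : ℝ :=
  κ.1 * θ 0 + κ.2.1 * θ 1 + (κ.2.2 : ℝ) * θ 2

/-- The frequency cube Θ = [−π,π)³. -/
def Theta : Set (Fin 3 → ℝ) := Set.univ.pi fun _ => Set.Ico (-Real.pi) Real.pi

open ComplexConjugate

theorem summable_pow_natAbs {ρ : ℝ} (h0 : 0 ≤ ρ) (h1 : ρ < 1) :
    Summable fun m : ℤ => ρ ^ m.natAbs :=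
  .of_nat_of_neg (by simpa using summable_geometric_of_lt_one h0 h1)
    (by simpa using summable_geometric_of_lt_one h0 h1)

theorem summable_pow_natAbs_mul_pow_natAbs_mul_pow {ρ₁ ρ₂ ρ₃ : ℝ} (h₁ : 0 ≤ ρ₁) (h₁' : ρ₁ < 1)
    (h₂ : 0 ≤ ρ₂) (h₂' : ρ₂ < 1) (h₃ : 0 ≤ ρ₃) (h₃' : ρ₃ < 1) :
    Summable fun κ : ℤ × ℤ × ℕ => ρ₁ ^ κ.1.natAbs * ρ₂ ^ κ.2.1.natAbs * ρ₃ ^ κ.2.2 := by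
  have h₂₃ : Summable fun p : ℤ × ℕ => ρ₂ ^ p.1.natAbs * ρ₃ ^ p.2 :=
    (summable_pow_natAbs h₂ h₂').mul_of_nonneg (summable_geometric_of_lt_one h₃ h₃')
      (fun _ => by positivity) fun _ => by positivity
  simpa only [mul_assoc] using
    (summable_pow_natAbs h₁ h₁').mul_of_nonneg h₂₃ (fun _ => by positivity) fun _ => by positivity

theorem norm_tsum_mul_exp_neg_I_mul_le {ι : Type*} {c : ι → ℂ} {w : ι → ℝ} (x : ι → ℝ)
    (hw : Summable w) (hc : ∀ κ, ‖c κ‖ ≤ w κ) :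
    ‖∑' κ, c κ * Complex.exp (-(Complex.I * x κ))‖ ≤ ∑' κ, w κ :=
  tsum_of_norm_bounded hw.hasSum fun κ => by
    simpa [Complex.norm_exp, Complex.mul_re] using hc κ

-- `0 ≤ C` is needed for the junk value `0` that `eigJ M j` takes when `j = 0` or `n < j`.
theorem eigJ_le {n : ℕ} {M : Matrix (Fin n) (Fin n) ℂ} (hM : M.IsHermitian) {C : ℝ} (hC : 0 ≤ C)
    (hle : ∀ i, hM.eigenvalues i ≤ C) (j : ℕ) : eigJ M j ≤ C := by
  rw [eigJ, dif_pos hM]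
  set l := (Finset.univ.val.map hM.eigenvalues).sort (· ≤ ·)
  rcases lt_or_ge (n - j) l.length with hj | hj
  · rw [List.getD_eq_getElem l 0 hj]
    obtain ⟨i, -, hi⟩ := Multiset.mem_map.mp ((Multiset.mem_sort _).mp (List.getElem_mem hj))
    exact hi ▸ hle i
  · rwa [List.getD_eq_default l 0 hj]

namespace Matrix

variable {𝕜 : Type*} [RCLike 𝕜]

theorem IsHermitian.eigenvalues_le_of_sum_norm_le {n : Type*} [Fintype n] [DecidableEq n]
    {M : Matrix n n 𝕜} (hM : M.IsHermitian) {C : ℝ} (hC : ∀ k, ∑ ℓ, ‖M k ℓ‖ ≤ C) (i : n) :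
    hM.eigenvalues i ≤ C := by
  have hμ : Module.End.HasEigenvalue (toLin' M) (hM.eigenvalues i : 𝕜) := by
    rw [Module.End.hasEigenvalue_iff_mem_spectrum, spectrum_toLin']
    exact spectrum.algebraMap_mem 𝕜 (hM.eigenvalues_mem_spectrum_real i)
  obtain ⟨k, hk⟩ := eigenvalue_mem_ball hμ
  rw [mem_closedBall_iff_norm] at hk
  calc hM.eigenvalues i ≤ ‖(hM.eigenvalues i : 𝕜)‖ := by
        rw [RCLike.norm_ofReal]; exact le_abs_self _
    _ ≤ ‖(hM.eigenvalues i : 𝕜) - M k k‖ + ‖M k k‖ := norm_le_norm_sub_add _ _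
    _ ≤ ∑ ℓ ∈ Finset.univ.erase k, ‖M k ℓ‖ + ‖M k k‖ := by gcongr
    _ = ∑ ℓ, ‖M k ℓ‖ := Finset.sum_erase_add _ _ (Finset.mem_univ k)
    _ ≤ C := hC k

variable {ι κ : Type*}

def seqGram (b : ι → κ → 𝕜) : Matrix ι ι 𝕜 := of fun i ℓ => ∑' j, b i j * conj (b ℓ j)

theorem isHermitian_seqGram (b : ι → κ → 𝕜) : (seqGram b).IsHermitian := by
  ext i ℓ
  simp only [seqGram, conjTranspose_apply, of_apply, tsum_star, star_mul', RCLike.star_def,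
    RCLike.conj_conj, mul_comm]

theorem sum_norm_seqGram_le [Fintype ι] {b : ι → κ → 𝕜} {B : ι → κ → ℝ} {R R' : ℝ}
    (hb : ∀ i j, ‖b i j‖ ≤ B i j) (hB : ∀ i j, 0 ≤ B i j) (hrow : ∀ i, Summable (B i))
    (hrow_le : ∀ i, ∑' j, B i j ≤ R) (hcol_le : ∀ j, ∑ i, B i j ≤ R') (hR' : 0 ≤ R') (k : ι) :
    ∑ ℓ, ‖seqGram b k ℓ‖ ≤ R' * R := by
  have hBle : ∀ ℓ j, B ℓ j ≤ R' := fun ℓ j =>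
    (Finset.single_le_sum (fun i _ => hB i j) (Finset.mem_univ ℓ)).trans (hcol_le j)
  have hsum : ∀ ℓ, Summable fun j => B k j * B ℓ j := fun ℓ =>
    ((hrow k).mul_right R').of_nonneg_of_le (fun j => mul_nonneg (hB k j) (hB ℓ j)) fun j =>
      mul_le_mul_of_nonneg_left (hBle ℓ j) (hB k j)
  calc ∑ ℓ, ‖seqGram b k ℓ‖ ≤ ∑ ℓ, ∑' j, B k j * B ℓ j := by
        refine Finset.sum_le_sum fun ℓ _ => tsum_of_norm_bounded (hsum ℓ).hasSum fun j => ?_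
        rw [norm_mul, RCLike.norm_conj]
        exact mul_le_mul (hb k j) (hb ℓ j) (norm_nonneg _) (hB k j)
    _ = ∑' j, B k j * ∑ ℓ, B ℓ j := by
        rw [← (Summable.tsum_finsetSum fun ℓ _ => hsum ℓ)]
        simp only [Finset.mul_sum]
    _ ≤ ∑' j, B k j * R' := by
        refine Summable.tsum_le_tsum (fun j => mul_le_mul_of_nonneg_left (hcol_le j) (hB k j)) ?_
          ((hrow k).mul_right R')
        simpa only [Finset.mul_sum] using summable_sum fun ℓ _ => hsum ℓ
    _ ≤ R' * R := by
        rw [tsum_mul_right, mul_comm]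
        exact mul_le_mul_of_nonneg_left (hrow_le k) hR'

end Matrix

/-- under the geometric bounds `|β_{ℓj,κ}| ≤ A_{ℓj} ρ₁^{|κ₁|}ρ₂^{|κ₂|}ρ₃^{κ₃}`
with `Σ_j A_{ℓj} ≤ A` and `Σ_ℓ A_{ℓj} ≤ A`, the largest eigenvalue of the idiosyncratic
spectral density matrix `Σ^ξ_n(θ)` (with entries `σ^ξ_{iℓ}(θ) = Σ_j b_{ij}(θ) conj(b_{ℓj}(θ))`,
`b_{ℓj}(θ) = Σ_κ β_{ℓj,κ} e^{−i⟨κ,θ⟩}`) is bounded by a constant `C`, depending only on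
`A, ρ₁, ρ₂, ρ₃`, uniformly over all `n ∈ ℕ` and all `θ ∈ Θ`. -/
theorem stmt_7 (β : ℕ → ℕ → ℤ × ℤ × ℕ → ℂ)
    (A : ℝ) (hA : 0 < A) (Acoef : ℕ → ℕ → ℝ) (hAcoef : ∀ ℓ j, 0 < Acoef ℓ j)
    (ρ₁ ρ₂ ρ₃ : ℝ)
    (hρ₁ : ρ₁ ∈ Set.Ioo (0 : ℝ) 1) (hρ₂ : ρ₂ ∈ Set.Ioo (0 : ℝ) 1)
    (hρ₃ : ρ₃ ∈ Set.Ioo (0 : ℝ) 1)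
    (hβ : ∀ ℓ j κ, ‖β ℓ j κ‖ ≤ Acoef ℓ j * ρ₁ ^ κ.1.natAbs * ρ₂ ^ κ.2.1.natAbs * ρ₃ ^ κ.2.2)
    (hrow : ∀ ℓ, Summable (Acoef ℓ) ∧ ∑' j, Acoef ℓ j ≤ A)
    (hcol : ∀ j, Summable (fun ℓ => Acoef ℓ j) ∧ ∑' ℓ, Acoef ℓ j ≤ A)
    (b : ℕ → ℕ → (Fin 3 → ℝ) → ℂ)
    (hb : ∀ ℓ j θ, b ℓ j θ =
      ∑' κ : ℤ × ℤ × ℕ, β ℓ j κ * Complex.exp (-(Complex.I * (kdot κ θ : ℝ))))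
    (σξ : ℕ → ℕ → (Fin 3 → ℝ) → ℂ)
    (hσ : ∀ i ℓ θ, σξ i ℓ θ = ∑' j : ℕ, b i j θ * (starRingEnd ℂ) (b ℓ j θ)) :
    ∃ C > 0, ∀ θ ∈ Theta, ∀ n : ℕ,
      eigJ (Matrix.of fun i ℓ : Fin n => σξ (i : ℕ) (ℓ : ℕ) θ) 1 ≤ C := by
  obtain ⟨hρ₁0, hρ₁1⟩ := hρ₁
  obtain ⟨hρ₂0, hρ₂1⟩ := hρ₂
  obtain ⟨hρ₃0, hρ₃1⟩ := hρ₃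
  set S := ∑' κ : ℤ × ℤ × ℕ, ρ₁ ^ κ.1.natAbs * ρ₂ ^ κ.2.1.natAbs * ρ₃ ^ κ.2.2
  have hS : 0 ≤ S := tsum_nonneg fun κ => by positivity
  have hbS : ∀ ℓ j θ, ‖b ℓ j θ‖ ≤ Acoef ℓ j * S := fun ℓ j θ => by
    rw [hb, ← tsum_mul_left]
    refine norm_tsum_mul_exp_neg_I_mul_le _ ?_ fun κ => (hβ ℓ j κ).trans_eq (by ring)
    exact (summable_pow_natAbs_mul_pow_natAbs_mul_pow hρ₁0.le hρ₁1 hρ₂0.le hρ₂1 hρ₃0.le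
      hρ₃1).mul_left _
  have hrowS : ∀ ℓ, ∑' j, Acoef ℓ j * S ≤ A * S := fun ℓ => by
    rw [tsum_mul_right]; exact mul_le_mul_of_nonneg_right (hrow ℓ).2 hS
  have hcolS : ∀ (n : ℕ) j, ∑ ℓ : Fin n, Acoef ℓ j * S ≤ A * S := fun n j => by
    rw [← Finset.sum_mul, Fin.sum_univ_eq_sum_range (Acoef · j)]
    exact mul_le_mul_of_nonneg_right
      (((hcol j).1.sum_le_tsum _ fun ℓ _ => (hAcoef ℓ j).le).trans (hcol j).2) hS
  refine ⟨A * S * (A * S) + 1, by positivity, fun θ _ n => ?_⟩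
  have hG : (of fun i ℓ : Fin n => σξ i ℓ θ) = seqGram fun (i : Fin n) j => b i j θ := by
    ext i ℓ
    simp only [seqGram, of_apply, hσ]
  rw [hG]
  refine (eigJ_le (isHermitian_seqGram _) (by positivity) (fun i => ?_) 1).trans
    (le_add_of_nonneg_right zero_le_one)
  refine IsHermitian.eigenvalues_le_of_sum_norm_le _ (fun k => ?_) i
  exact sum_norm_seqGram_le (B := fun (i : Fin n) j => Acoef i j * S) (fun i j => hbS i j θ)
    (fun i j => mul_nonneg (hAcoef i j).le hS) (fun i => (hrow i).1.mul_right S)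
    (fun i => hrowS i) (hcolS n) (by positivity) k

end
end

section
/- For every ℓ ∈ ℕ and every ς = (s₁,s₂,t) ∈ ℤ³: if t < 0 then x_{ℓ,ς} = x*_{ℓ,ς}; and there exist ρ̃₁, ρ̃₂, ρ̃₃ ∈ (0,1) (namely ρ̃_h = max(ρ^χ_h, ρ^ξ_h) for h = 1,2,3) and a finite constant Ã₂ > 0, depending only on p, Ā, A^χ and A^ξ, such that for all ς with t ≥ 0, ( E|x_{ℓ,ς} − x*_{ℓ,ς}|^p )^{1/p} ≤ Ã₂ · ρ̃₁^{|s₁|} · ρ̃₂^{|s₂|} · ρ̃₃^{t}. -/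
/-!
Coupling replaces only the innovations at the origin, so in the partial sums of `x_{ℓ,ς}` and
`x*_{ℓ,ς}` the only terms that differ are those whose lag `κ` satisfies `ς - κ = 0`. If `t < 0`
there is no such lag, because the temporal lag `κ₃` is nonnegative; if `t ≥ 0` the lag is
`κ = ς`, where the coefficients are at most `A_{ℓj} ρ̃₁^{|s₁|} ρ̃₂^{|s₂|} ρ̃₃^t` with
`A_{ℓj} = A^χ_{ℓj}` or `A^ξ_{ℓj}`, and each innovation difference has `L^p` norm at most
`2 Ā^{1/p}`. The triangle inequality in `L^p` carries this bound on the partial-sum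
differences over to the limits.
-/

open MeasureTheory Filter
open scoped ENNReal

noncomputable section

/-- Spatio-temporal lag: `ς − κ` with `ς ∈ ℤ³` and `κ ∈ ℤ×ℤ×ℕ₀`. -/
def subK (ς : ℤ × ℤ × ℤ) (κ : ℤ × ℤ × ℕ) : ℤ × ℤ × ℤ :=
  (ς.1 - κ.1, ς.2.1 - κ.2.1, ς.2.2 - (κ.2.2 : ℤ))

section HasSumLp

variable {α ι E : Type*} [MeasurableSpace α] [NormedAddCommGroup E]

def HasSumLp (f : ι → α → E) (X : α → E) (p : ℝ≥0∞) (μ : Measure α) : Prop :=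
  Tendsto (fun F : Finset ι => eLpNorm (fun ω => X ω - ∑ i ∈ F, f i ω) p μ) atTop (nhds 0)

theorem HasSumLp.eLpNorm_sub_le_tsum {μ : Measure α} {p : ℝ≥0∞} {f g : ι → α → E}
    {X Y : α → E} (hp : 1 ≤ p) (hX : HasSumLp f X p μ) (hY : HasSumLp g Y p μ)
    (hXm : AEStronglyMeasurable X μ) (hYm : AEStronglyMeasurable Y μ)
    (hfm : ∀ i, AEStronglyMeasurable (f i) μ) (hgm : ∀ i, AEStronglyMeasurable (g i) μ) :
    eLpNorm (X - Y) p μ ≤ ∑' i, eLpNorm (f i - g i) p μ := by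
  set B := ∑' i, eLpNorm (f i - g i) p μ
  have hbound (F : Finset ι) : eLpNorm (X - Y) p μ ≤
      eLpNorm (fun ω => X ω - ∑ i ∈ F, f i ω) p μ +
        eLpNorm (fun ω => Y ω - ∑ i ∈ F, g i ω) p μ + B := by
    have hS : AEStronglyMeasurable (fun ω => ∑ i ∈ F, f i ω) μ :=
      Finset.aestronglyMeasurable_fun_sum F fun i _ => hfm i
    have hT : AEStronglyMeasurable (fun ω => ∑ i ∈ F, g i ω) μ :=
      Finset.aestronglyMeasurable_fun_sum F fun i _ => hgm i
    have hsplit : X - Y = ((fun ω => X ω - ∑ i ∈ F, f i ω) - fun ω => Y ω - ∑ i ∈ F, g i ω) +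
        ∑ i ∈ F, (f i - g i) := by
      funext ω
      simp only [Pi.add_apply, Pi.sub_apply, Finset.sum_apply, Finset.sum_sub_distrib]
      abel
    calc eLpNorm (X - Y) p μ
        ≤ eLpNorm (fun ω => X ω - ∑ i ∈ F, f i ω) p μ +
            eLpNorm (fun ω => Y ω - ∑ i ∈ F, g i ω) p μ +
              eLpNorm (∑ i ∈ F, (f i - g i)) p μ := by
          rw [hsplit]
          exact (eLpNorm_add_le ((hXm.sub hS).sub (hYm.sub hT))
            (Finset.aestronglyMeasurable_sum F fun i _ => (hfm i).sub (hgm i)) hp).trans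
            (add_le_add (eLpNorm_sub_le (hXm.sub hS) (hYm.sub hT) hp) le_rfl)
      _ ≤ _ := by
          gcongr
          exact (eLpNorm_sum_le (fun i _ => (hfm i).sub (hgm i)) hp).trans
            (ENNReal.sum_le_tsum F)
  have hlim : Tendsto (fun F : Finset ι => eLpNorm (fun ω => X ω - ∑ i ∈ F, f i ω) p μ +
      eLpNorm (fun ω => Y ω - ∑ i ∈ F, g i ω) p μ + B) atTop (nhds B) := by
    simpa using (hX.add hY).add_const B
  exact ge_of_tendsto' hlim hbound

end HasSumLp

section LagSeries

variable {α ι 𝕜 : Type*} [NormedField 𝕜]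

def originLag (ς : ℤ × ℤ × ℤ) : ℤ × ℤ × ℕ := (ς.1, ς.2.1, ς.2.2.toNat)

theorem subK_eq_zero_iff {ς : ℤ × ℤ × ℤ} {κ : ℤ × ℤ × ℕ} :
    subK ς κ = 0 ↔ 0 ≤ ς.2.2 ∧ κ = originLag ς := by
  obtain ⟨s₁, s₂, t⟩ := ς
  obtain ⟨k₁, k₂, n⟩ := κ
  simp only [subK, originLag, Prod.mk_eq_zero, Prod.mk.injEq, sub_eq_zero]
  omega

theorem tsum_ite_subK_eq_zero {M : Type*} [AddCommMonoid M] [TopologicalSpace M]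
    (ς : ℤ × ℤ × ℤ) (f : (ℤ × ℤ × ℕ) × ι → M) :
    ∑' t : (ℤ × ℤ × ℕ) × ι, (if subK ς t.1 = 0 then f t else 0) =
      if 0 ≤ ς.2.2 then ∑' j, f (originLag ς, j) else 0 := by
  split_ifs with hς
  · rw [← (Prod.mk_right_injective (originLag ς)).tsum_eq]
    · simp [subK_eq_zero_iff, hς]
    · intro t ht
      have h0 : subK ς t.1 = 0 := by by_contra h; simp [h] at ht
      exact ⟨t.2, Prod.ext (subK_eq_zero_iff.mp h0).2.symm rfl⟩
  · simp [subK_eq_zero_iff, hς]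

def lagTerm (a : ι → ℤ × ℤ × ℕ → 𝕜) (w : ι → ℤ × ℤ × ℤ → α → 𝕜) (ς : ℤ × ℤ × ℤ)
    (t : (ℤ × ℤ × ℕ) × ι) (ω : α) : 𝕜 :=
  a t.2 t.1 * w t.2 (subK ς t.1) ω

theorem lagTerm_sumElim {ι₁ ι₂ : Type*} (c : ι₁ → ℤ × ℤ × ℕ → 𝕜) (β : ι₂ → ℤ × ℤ × ℕ → 𝕜)
    (v : ι₁ → ℤ × ℤ × ℤ → α → 𝕜) (ε : ι₂ → ℤ × ℤ × ℤ → α → 𝕜) (ς : ℤ × ℤ × ℤ)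
    (t : (ℤ × ℤ × ℕ) × (ι₁ ⊕ ι₂)) (ω : α) :
    lagTerm (Sum.elim c β) (Sum.elim v ε) ς t ω =
      Sum.elim (fun j => c j t.1 * v j (subK ς t.1) ω) (fun j => β j t.1 * ε j (subK ς t.1) ω)
        t.2 := by
  obtain ⟨κ, j | j⟩ := t <;> rfl

theorem lagTerm_sub_lagTerm_update (a : ι → ℤ × ℤ × ℕ → 𝕜) (w : ι → ℤ × ℤ × ℤ → α → 𝕜)
    (wt : ι → α → 𝕜) (ς : ℤ × ℤ × ℤ) (t : (ℤ × ℤ × ℕ) × ι) :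
    lagTerm a w ς t - lagTerm a (fun j => Function.update (w j) 0 (wt j)) ς t =
      if subK ς t.1 = 0 then a t.2 t.1 • (w t.2 0 - wt t.2) else 0 := by
  funext ω
  split_ifs with h0
  · simp [lagTerm, h0, mul_sub]
  · simp [lagTerm, Function.update_of_ne h0]

theorem eLpNorm_sub_le_of_hasSumLp_lagTerm_update [MeasurableSpace α] {μ : Measure α}
    {p : ℝ≥0∞} {a : ι → ℤ × ℤ × ℕ → 𝕜} {w : ι → ℤ × ℤ × ℤ → α → 𝕜} {wt : ι → α → 𝕜}
    {ς : ℤ × ℤ × ℤ} {X X' : α → 𝕜} (hp : 1 ≤ p)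
    (hwm : ∀ j σ, AEStronglyMeasurable (w j σ) μ) (hwtm : ∀ j, AEStronglyMeasurable (wt j) μ)
    (hX : HasSumLp (lagTerm a w ς) X p μ)
    (hX' : HasSumLp (lagTerm a (fun j => Function.update (w j) 0 (wt j)) ς) X' p μ)
    (hXm : AEStronglyMeasurable X μ) (hX'm : AEStronglyMeasurable X' μ) :
    eLpNorm (X - X') p μ ≤
      if 0 ≤ ς.2.2 then ∑' j, ‖a j (originLag ς)‖ₑ * eLpNorm (w j 0 - wt j) p μ else 0 := by
  have hw'm (j : ι) (σ : ℤ × ℤ × ℤ) :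
      AEStronglyMeasurable (Function.update (w j) 0 (wt j) σ) μ := by
    rw [Function.update_apply]
    split_ifs
    exacts [hwtm j, hwm j σ]
  refine (hX.eLpNorm_sub_le_tsum hp hX' hXm hX'm (fun t => (hwm _ _).const_mul _)
    (fun t => (hw'm _ _).const_mul _)).trans_eq ?_
  simp_rw [lagTerm_sub_lagTerm_update, apply_ite (eLpNorm · p μ), eLpNorm_const_smul,
    eLpNorm_zero]
  exact tsum_ite_subK_eq_zero ς _

end LagSeries

section CoefficientBounds

variable {𝕜 : Type*} [NormedField 𝕜]

theorem norm_le_mul_pow_mul_pow_mul_pow {z : 𝕜} {A ρ₁ ρ₂ ρ₃ m₁ m₂ m₃ : ℝ} {n₁ n₂ n₃ : ℕ}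
    (hz : ‖z‖ ≤ A * ρ₁ ^ n₁ * ρ₂ ^ n₂ * ρ₃ ^ n₃) (hA : 0 ≤ A)
    (h₁ : 0 ≤ ρ₁) (h₂ : 0 ≤ ρ₂) (h₃ : 0 ≤ ρ₃) (hm₁ : ρ₁ ≤ m₁) (hm₂ : ρ₂ ≤ m₂) (hm₃ : ρ₃ ≤ m₃) :
    ‖z‖ ≤ A * (m₁ ^ n₁ * m₂ ^ n₂ * m₃ ^ n₃) := by
  have := h₁.trans hm₁
  have := h₂.trans hm₂
  rw [← mul_assoc, ← mul_assoc]
  exact hz.trans (by gcongr)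

theorem tsum_enorm_le_ofReal_tsum {ι : Type*} {c : ι → 𝕜} {A : ι → ℝ}
    (hc : ∀ j, ‖c j‖ ≤ A j) (hA : Summable A) :
    ∑' j, ‖c j‖ₑ ≤ ENNReal.ofReal (∑' j, A j) := by
  rw [ENNReal.ofReal_tsum_of_nonneg (fun j => (norm_nonneg _).trans (hc j)) hA]
  exact ENNReal.tsum_le_tsum fun j => by
    rw [← ofReal_norm]
    exact ENNReal.ofReal_le_ofReal (hc j)

theorem tsum_enorm_sumElim_le {ι₁ ι₂ K : Type*} {c : ι₁ → K → 𝕜} {d : ι₂ → K → 𝕜} {κ : K}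
    {A : ι₁ → ℝ} {B : ι₂ → ℝ} (hc : ∀ j, ‖c j κ‖ ≤ A j) (hd : ∀ j, ‖d j κ‖ ≤ B j)
    (hA : Summable A) (hB : Summable B) :
    ∑' j, ‖Sum.elim c d j κ‖ₑ ≤ ENNReal.ofReal (∑' j, A j + ∑' j, B j) := by
  rw [Summable.tsum_sum ENNReal.summable ENNReal.summable, ENNReal.ofReal_add
    (tsum_nonneg fun j => (norm_nonneg _).trans (hc j))
    (tsum_nonneg fun j => (norm_nonneg _).trans (hd j))]
  exact add_le_add (tsum_enorm_le_ofReal_tsum hc hA) (tsum_enorm_le_ofReal_tsum hd hB)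

theorem tsum_enorm_sumElim_le_of_geometric {ι₁ ι₂ : Type*}
    {c : ι₁ → ℤ × ℤ × ℕ → 𝕜} {d : ι₂ → ℤ × ℤ × ℕ → 𝕜} {A : ι₁ → ℝ} {B : ι₂ → ℝ}
    {ρ₁ ρ₂ ρ₃ σ₁ σ₂ σ₃ S T : ℝ} (hρ₁ : 0 ≤ ρ₁) (hρ₂ : 0 ≤ ρ₂) (hρ₃ : 0 ≤ ρ₃)
    (hσ₁ : 0 ≤ σ₁) (hσ₂ : 0 ≤ σ₂) (hσ₃ : 0 ≤ σ₃) (hA₀ : ∀ j, 0 ≤ A j) (hB₀ : ∀ j, 0 ≤ B j)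
    (hc : ∀ j κ, ‖c j κ‖ ≤ A j * ρ₁ ^ κ.1.natAbs * ρ₂ ^ κ.2.1.natAbs * ρ₃ ^ κ.2.2)
    (hd : ∀ j κ, ‖d j κ‖ ≤ B j * σ₁ ^ κ.1.natAbs * σ₂ ^ κ.2.1.natAbs * σ₃ ^ κ.2.2)
    (hA : Summable A) (hB : Summable B) (hAS : ∑' j, A j ≤ S) (hBT : ∑' j, B j ≤ T)
    (κ : ℤ × ℤ × ℕ) :
    ∑' j, ‖Sum.elim c d j κ‖ₑ ≤ ENNReal.ofReal ((S + T) *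
      (max ρ₁ σ₁ ^ κ.1.natAbs * max ρ₂ σ₂ ^ κ.2.1.natAbs * max ρ₃ σ₃ ^ κ.2.2)) := by
  refine (tsum_enorm_sumElim_le
    (fun j => norm_le_mul_pow_mul_pow_mul_pow (hc j κ) (hA₀ j) hρ₁ hρ₂ hρ₃
      (le_max_left ρ₁ σ₁) (le_max_left ρ₂ σ₂) (le_max_left ρ₃ σ₃))
    (fun j => norm_le_mul_pow_mul_pow_mul_pow (hd j κ) (hB₀ j) hσ₁ hσ₂ hσ₃
      (le_max_right ρ₁ σ₁) (le_max_right ρ₂ σ₂) (le_max_right ρ₃ σ₃))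
    (hA.mul_right _) (hB.mul_right _)).trans (ENNReal.ofReal_le_ofReal ?_)
  rw [tsum_mul_right, tsum_mul_right, ← add_mul]
  exact mul_le_mul_of_nonneg_right (add_le_add hAS hBT) (by positivity)

end CoefficientBounds

section Moments

variable {α E : Type*} [MeasurableSpace α] [NormedAddCommGroup E] {μ : Measure α} {p : ℝ}
  {f : α → E}

theorem MeasureTheory.MemLp.eLpNorm_ofReal_eq (hp : 0 < p) (hf : MemLp f (ENNReal.ofReal p) μ) :
    eLpNorm f (ENNReal.ofReal p) μ = ENNReal.ofReal ((∫ ω, ‖f ω‖ ^ p ∂μ) ^ p⁻¹) := by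
  rw [hf.eLpNorm_eq_integral_rpow_norm (by simpa using hp) ENNReal.ofReal_ne_top,
    ENNReal.toReal_ofReal hp.le]

theorem MeasureTheory.MemLp.eLpNorm_ofReal_le {A : ℝ} (hp : 0 < p)
    (hf : MemLp f (ENNReal.ofReal p) μ) (hA : ∫ ω, ‖f ω‖ ^ p ∂μ ≤ A) :
    eLpNorm f (ENNReal.ofReal p) μ ≤ ENNReal.ofReal (A ^ p⁻¹) := by
  rw [hf.eLpNorm_ofReal_eq hp]
  exact ENNReal.ofReal_le_ofReal
    (Real.rpow_le_rpow (integral_nonneg fun _ => by positivity) hA (by positivity))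

theorem MeasureTheory.MemLp.integral_norm_rpow_rpow_inv_le {K : ℝ} (hp : 0 < p)
    (hf : MemLp f (ENNReal.ofReal p) μ) (hK : 0 ≤ K)
    (h : eLpNorm f (ENNReal.ofReal p) μ ≤ ENNReal.ofReal K) :
    (∫ ω, ‖f ω‖ ^ p ∂μ) ^ p⁻¹ ≤ K := by
  rwa [hf.eLpNorm_ofReal_eq hp, ENNReal.ofReal_le_ofReal_iff hK] at h

end Moments

section CoupledLagSeries

variable {α ι 𝕜 : Type*} [MeasurableSpace α] [NormedField 𝕜] {μ : Measure α} {p A : ℝ}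
  {a : ι → ℤ × ℤ × ℕ → 𝕜} {w : ι → ℤ × ℤ × ℤ → α → 𝕜} {wt : ι → α → 𝕜} {ς : ℤ × ℤ × ℤ}
  {X X' : α → 𝕜}

theorem ae_eq_of_hasSumLp_lagTerm_update (hp : 1 ≤ p)
    (hw : ∀ j σ, MemLp (w j σ) (ENNReal.ofReal p) μ) (hwt : ∀ j, MemLp (wt j) (ENNReal.ofReal p) μ)
    (hX : HasSumLp (lagTerm a w ς) X (ENNReal.ofReal p) μ)
    (hX' : HasSumLp (lagTerm a (fun j => Function.update (w j) 0 (wt j)) ς) X'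
      (ENNReal.ofReal p) μ)
    (hXm : MemLp X (ENNReal.ofReal p) μ) (hX'm : MemLp X' (ENNReal.ofReal p) μ)
    (hς : ς.2.2 < 0) : X =ᵐ[μ] X' := by
  have h0 := eLpNorm_sub_le_of_hasSumLp_lagTerm_update (ENNReal.one_le_ofReal.mpr hp)
    (fun j σ => (hw j σ).1) (fun j => (hwt j).1) hX hX' hXm.1 hX'm.1
  rw [if_neg hς.not_ge, nonpos_iff_eq_zero,
    eLpNorm_eq_zero_iff (hXm.sub hX'm).1 (ENNReal.ofReal_pos.mpr (by linarith)).ne'] at h0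
  exact eventuallyEq_iff_sub.mpr h0

theorem integral_norm_sub_rpow_rpow_inv_le_of_hasSumLp_lagTerm_update {S : ℝ} (hp : 1 ≤ p)
    (hw : ∀ j σ, MemLp (w j σ) (ENNReal.ofReal p) μ ∧ ∫ ω, ‖w j σ ω‖ ^ p ∂μ ≤ A)
    (hwt : ∀ j, MemLp (wt j) (ENNReal.ofReal p) μ ∧ ∫ ω, ‖wt j ω‖ ^ p ∂μ ≤ A)
    (hX : HasSumLp (lagTerm a w ς) X (ENNReal.ofReal p) μ)
    (hX' : HasSumLp (lagTerm a (fun j => Function.update (w j) 0 (wt j)) ς) X'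
      (ENNReal.ofReal p) μ)
    (hXm : MemLp X (ENNReal.ofReal p) μ) (hX'm : MemLp X' (ENNReal.ofReal p) μ)
    (hς : 0 ≤ ς.2.2) (hA : 0 ≤ A) (hS : 0 ≤ S)
    (ha : ∑' j, ‖a j (originLag ς)‖ₑ ≤ ENNReal.ofReal S) :
    (∫ ω, ‖X ω - X' ω‖ ^ p ∂μ) ^ p⁻¹ ≤ S * (2 * A ^ p⁻¹) := by
  have hp0 : 0 < p := by linarith
  have hP : 1 ≤ ENNReal.ofReal p := ENNReal.one_le_ofReal.mpr hp
  have hinnov (j : ι) : eLpNorm (w j 0 - wt j) (ENNReal.ofReal p) μ ≤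
      ENNReal.ofReal (2 * A ^ p⁻¹) := by
    rw [two_mul, ENNReal.ofReal_add (by positivity) (by positivity)]
    exact (eLpNorm_sub_le (hw j 0).1.1 (hwt j).1.1 hP).trans (add_le_add
      ((hw j 0).1.eLpNorm_ofReal_le hp0 (hw j 0).2) ((hwt j).1.eLpNorm_ofReal_le hp0 (hwt j).2))
  refine (hXm.sub hX'm).integral_norm_rpow_rpow_inv_le hp0 (by positivity) ?_
  calc eLpNorm (X - X') (ENNReal.ofReal p) μ
      ≤ ∑' j, ‖a j (originLag ς)‖ₑ * ENNReal.ofReal (2 * A ^ p⁻¹) := by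
        refine (eLpNorm_sub_le_of_hasSumLp_lagTerm_update hP (fun j σ => (hw j σ).1.1)
          (fun j => (hwt j).1.1) hX hX' hXm.1 hX'm.1).trans ?_
        rw [if_pos hς]
        gcongr with j
        exact hinnov j
    _ ≤ ENNReal.ofReal S * ENNReal.ofReal (2 * A ^ p⁻¹) := by
        rw [ENNReal.tsum_mul_right]
        gcongr
    _ = ENNReal.ofReal (S * (2 * A ^ p⁻¹)) := (ENNReal.ofReal_mul hS).symm

end CoupledLagSeries

theorem stmt_9_general {Ω : Type} [MeasurableSpace Ω] (μ : Measure Ω)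
    (q : ℕ) (p : ℝ) (hp : 1 ≤ p)
    (v : Fin q → ℤ × ℤ × ℤ → Ω → ℂ) (ε : ℕ → ℤ × ℤ × ℤ → Ω → ℂ)
    (Abar : ℝ) (hAbar : 0 < Abar)
    (hv : ∀ j ς, MemLp (v j ς) (ENNReal.ofReal p) μ ∧ ∫ ω, ‖v j ς ω‖ ^ p ∂μ ≤ Abar)
    (hε : ∀ j ς, MemLp (ε j ς) (ENNReal.ofReal p) μ ∧ ∫ ω, ‖ε j ς ω‖ ^ p ∂μ ≤ Abar)
    (c : ℕ → Fin q → ℤ × ℤ × ℕ → ℂ) (β : ℕ → ℕ → ℤ × ℤ × ℕ → ℂ)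
    (ρχ₁ ρχ₂ ρχ₃ ρξ₁ ρξ₂ ρξ₃ : ℝ)
    (hρχ₁ : ρχ₁ ∈ Set.Ioo (0 : ℝ) 1) (hρχ₂ : ρχ₂ ∈ Set.Ioo (0 : ℝ) 1)
    (hρχ₃ : ρχ₃ ∈ Set.Ioo (0 : ℝ) 1) (hρξ₁ : ρξ₁ ∈ Set.Ioo (0 : ℝ) 1)
    (hρξ₂ : ρξ₂ ∈ Set.Ioo (0 : ℝ) 1) (hρξ₃ : ρξ₃ ∈ Set.Ioo (0 : ℝ) 1)
    (Aχ : ℕ → Fin q → ℝ) (Aξ : ℕ → ℕ → ℝ)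
    (hAχpos : ∀ ℓ j, 0 < Aχ ℓ j) (hAξpos : ∀ ℓ j, 0 < Aξ ℓ j)
    (hc : ∀ ℓ j κ, ‖c ℓ j κ‖ ≤ Aχ ℓ j * ρχ₁ ^ κ.1.natAbs * ρχ₂ ^ κ.2.1.natAbs * ρχ₃ ^ κ.2.2)
    (hβ : ∀ ℓ j κ, ‖β ℓ j κ‖ ≤ Aξ ℓ j * ρξ₁ ^ κ.1.natAbs * ρξ₂ ^ κ.2.1.natAbs * ρξ₃ ^ κ.2.2)
    (AX AXi : ℝ)
    (hAχsum : ∀ ℓ, ∑ j, Aχ ℓ j ≤ AX)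
    (hAξsum : ∀ ℓ, Summable (Aξ ℓ) ∧ ∑' j, Aξ ℓ j ≤ AXi)
    -- coupled innovations
    (vt : Fin q → Ω → ℂ) (εt : ℕ → Ω → ℂ)
    (hvt : ∀ j, MemLp (vt j) (ENNReal.ofReal p) μ ∧ ∫ ω, ‖vt j ω‖ ^ p ∂μ ≤ Abar)
    (hεt : ∀ j, MemLp (εt j) (ENNReal.ofReal p) μ ∧ ∫ ω, ‖εt j ω‖ ^ p ∂μ ≤ Abar)
    (vstar : Fin q → ℤ × ℤ × ℤ → Ω → ℂ) (εstar : ℕ → ℤ × ℤ × ℤ → Ω → ℂ)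
    (hvstar : ∀ j ς, vstar j ς = if ς = ((0 : ℤ), (0 : ℤ), (0 : ℤ)) then vt j else v j ς)
    (hεstar : ∀ j ς, εstar j ς = if ς = ((0 : ℤ), (0 : ℤ), (0 : ℤ)) then εt j else ε j ς)
    -- the processes, as L^p-convergent series
    (x xstar : ℕ → ℤ × ℤ × ℤ → Ω → ℂ)
    (hx : ∀ ℓ ς, MemLp (x ℓ ς) (ENNReal.ofReal p) μ ∧
      Tendsto (fun F : Finset ((ℤ × ℤ × ℕ) × (Fin q ⊕ ℕ)) =>
        eLpNorm (fun ω => x ℓ ς ω - ∑ t ∈ F,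
            Sum.elim (fun j => c ℓ j t.1 * v j (subK ς t.1) ω)
                     (fun j => β ℓ j t.1 * ε j (subK ς t.1) ω) t.2)
          (ENNReal.ofReal p) μ) atTop (nhds 0))
    (hxstar : ∀ ℓ ς, MemLp (xstar ℓ ς) (ENNReal.ofReal p) μ ∧
      Tendsto (fun F : Finset ((ℤ × ℤ × ℕ) × (Fin q ⊕ ℕ)) =>
        eLpNorm (fun ω => xstar ℓ ς ω - ∑ t ∈ F,
            Sum.elim (fun j => c ℓ j t.1 * vstar j (subK ς t.1) ω)
                     (fun j => β ℓ j t.1 * εstar j (subK ς t.1) ω) t.2)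
          (ENNReal.ofReal p) μ) atTop (nhds 0)) :
    (∀ (ℓ : ℕ) (ς : ℤ × ℤ × ℤ), ς.2.2 < 0 → x ℓ ς =ᵐ[μ] xstar ℓ ς) ∧
    ∃ C > 0, ∀ (ℓ : ℕ) (ς : ℤ × ℤ × ℤ), 0 ≤ ς.2.2 →
      (∫ ω, ‖x ℓ ς ω - xstar ℓ ς ω‖ ^ p ∂μ) ^ (1 / p) ≤
        C * max ρχ₁ ρξ₁ ^ ς.1.natAbs * max ρχ₂ ρξ₂ ^ ς.2.1.natAbs *
          max ρχ₃ ρξ₃ ^ ς.2.2.toNat := by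
  set w : Fin q ⊕ ℕ → ℤ × ℤ × ℤ → Ω → ℂ := Sum.elim v ε
  set wt : Fin q ⊕ ℕ → Ω → ℂ := Sum.elim vt εt
  have hw : ∀ j σ, MemLp (w j σ) (ENNReal.ofReal p) μ ∧ ∫ ω, ‖w j σ ω‖ ^ p ∂μ ≤ Abar :=
    Sum.forall.mpr ⟨hv, hε⟩
  have hwt : ∀ j, MemLp (wt j) (ENNReal.ofReal p) μ ∧ ∫ ω, ‖wt j ω‖ ^ p ∂μ ≤ Abar :=
    Sum.forall.mpr ⟨hvt, hεt⟩
  have hstar : Sum.elim vstar εstar = fun j => Function.update (w j) 0 (wt j) := by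
    funext j σ
    rcases j with j | j <;>
      simp [w, wt, Function.update_apply, hvstar, hεstar, Prod.mk_zero_zero]
  have hX (ℓ ς) : HasSumLp (lagTerm (Sum.elim (c ℓ) (β ℓ)) w ς) (x ℓ ς) (ENNReal.ofReal p) μ := by
    simpa only [HasSumLp, w, lagTerm_sumElim] using (hx ℓ ς).2
  have hX' (ℓ ς) : HasSumLp (lagTerm (Sum.elim (c ℓ) (β ℓ))
      (fun j => Function.update (w j) 0 (wt j)) ς) (xstar ℓ ς) (ENNReal.ofReal p) μ := by
    simpa only [HasSumLp, ← hstar, lagTerm_sumElim] using (hxstar ℓ ς).2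
  refine ⟨fun ℓ ς hς => ae_eq_of_hasSumLp_lagTerm_update hp (fun j σ => (hw j σ).1)
    (fun j => (hwt j).1) (hX ℓ ς) (hX' ℓ ς) (hx ℓ ς).1 (hxstar ℓ ς).1 hς, ?_⟩
  have hS : 0 ≤ AX + AXi := add_nonneg
    ((Finset.sum_nonneg fun j _ => (hAχpos 0 j).le).trans (hAχsum 0))
    ((tsum_nonneg fun j => (hAξpos 0 j).le).trans (hAξsum 0).2)
  set K := (AX + AXi) * (2 * Abar ^ p⁻¹)
  refine ⟨max 1 K, lt_max_of_lt_left one_pos, fun ℓ ς hς => ?_⟩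
  set R := max ρχ₁ ρξ₁ ^ ς.1.natAbs * max ρχ₂ ρξ₂ ^ ς.2.1.natAbs * max ρχ₃ ρξ₃ ^ ς.2.2.toNat
    with hR_def
  have hR : 0 ≤ R := by
    have := hρχ₁.1; have := hρχ₂.1; have := hρχ₃.1
    positivity
  have hcoef := tsum_enorm_sumElim_le_of_geometric hρχ₁.1.le hρχ₂.1.le hρχ₃.1.le hρξ₁.1.le
    hρξ₂.1.le hρξ₃.1.le (fun j => (hAχpos ℓ j).le) (fun j => (hAξpos ℓ j).le) (hc ℓ) (hβ ℓ)
    Summable.of_finite (hAξsum ℓ).1 ((tsum_fintype _).trans_le (hAχsum ℓ)) (hAξsum ℓ).2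
    (originLag ς)
  rw [one_div]
  calc _ ≤ (AX + AXi) * R * (2 * Abar ^ p⁻¹) :=
        integral_norm_sub_rpow_rpow_inv_le_of_hasSumLp_lagTerm_update hp hw hwt (hX ℓ ς)
          (hX' ℓ ς) (hx ℓ ς).1 (hxstar ℓ ς).1 hς hAbar.le (mul_nonneg hS hR) hcoef
    _ = K * R := by ring
    _ ≤ max 1 K * R := mul_le_mul_of_nonneg_right (le_max_right 1 K) hR
    _ = _ := by rw [hR_def]; ring

/-- with `x` the GSTFM process and `x*` its coupled version (innovations
replaced at the origin), for every `ℓ` and `ς = (s₁,s₂,t)`:  if `t < 0` then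
`x_{ℓ,ς} = x*_{ℓ,ς}` (a.e.), and there is a constant `Ã₂ > 0` such that for `t ≥ 0`,
`(E|x_{ℓ,ς} − x*_{ℓ,ς}|^p)^{1/p} ≤ Ã₂ ρ̃₁^{|s₁|} ρ̃₂^{|s₂|} ρ̃₃^{t}` where
`ρ̃_h = max(ρ^χ_h, ρ^ξ_h)`. -/
theorem stmt_9 {Ω : Type} [MeasurableSpace Ω] (μ : Measure Ω) [IsProbabilityMeasure μ]
    (q : ℕ) (p : ℝ) (hp : 1 ≤ p)
    (v : Fin q → ℤ × ℤ × ℤ → Ω → ℂ) (ε : ℕ → ℤ × ℤ × ℤ → Ω → ℂ)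
    (Abar : ℝ) (hAbar : 0 < Abar)
    (hv : ∀ j ς, MemLp (v j ς) (ENNReal.ofReal p) μ ∧ ∫ ω, ‖v j ς ω‖ ^ p ∂μ ≤ Abar)
    (hε : ∀ j ς, MemLp (ε j ς) (ENNReal.ofReal p) μ ∧ ∫ ω, ‖ε j ς ω‖ ^ p ∂μ ≤ Abar)
    (c : ℕ → Fin q → ℤ × ℤ × ℕ → ℂ) (β : ℕ → ℕ → ℤ × ℤ × ℕ → ℂ)
    (ρχ₁ ρχ₂ ρχ₃ ρξ₁ ρξ₂ ρξ₃ : ℝ)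
    (hρχ₁ : ρχ₁ ∈ Set.Ioo (0 : ℝ) 1) (hρχ₂ : ρχ₂ ∈ Set.Ioo (0 : ℝ) 1)
    (hρχ₃ : ρχ₃ ∈ Set.Ioo (0 : ℝ) 1) (hρξ₁ : ρξ₁ ∈ Set.Ioo (0 : ℝ) 1)
    (hρξ₂ : ρξ₂ ∈ Set.Ioo (0 : ℝ) 1) (hρξ₃ : ρξ₃ ∈ Set.Ioo (0 : ℝ) 1)
    (Aχ : ℕ → Fin q → ℝ) (Aξ : ℕ → ℕ → ℝ)
    (hAχpos : ∀ ℓ j, 0 < Aχ ℓ j) (hAξpos : ∀ ℓ j, 0 < Aξ ℓ j)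
    (hc : ∀ ℓ j κ, ‖c ℓ j κ‖ ≤ Aχ ℓ j * ρχ₁ ^ κ.1.natAbs * ρχ₂ ^ κ.2.1.natAbs * ρχ₃ ^ κ.2.2)
    (hβ : ∀ ℓ j κ, ‖β ℓ j κ‖ ≤ Aξ ℓ j * ρξ₁ ^ κ.1.natAbs * ρξ₂ ^ κ.2.1.natAbs * ρξ₃ ^ κ.2.2)
    (AX AXi : ℝ)
    (hAχsum : ∀ ℓ, ∑ j, Aχ ℓ j ≤ AX)
    (hAξsum : ∀ ℓ, Summable (Aξ ℓ) ∧ ∑' j, Aξ ℓ j ≤ AXi)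
    -- coupled innovations
    (vt : Fin q → Ω → ℂ) (εt : ℕ → Ω → ℂ)
    (hvt : ∀ j, MemLp (vt j) (ENNReal.ofReal p) μ ∧ ∫ ω, ‖vt j ω‖ ^ p ∂μ ≤ Abar)
    (hεt : ∀ j, MemLp (εt j) (ENNReal.ofReal p) μ ∧ ∫ ω, ‖εt j ω‖ ^ p ∂μ ≤ Abar)
    (vstar : Fin q → ℤ × ℤ × ℤ → Ω → ℂ) (εstar : ℕ → ℤ × ℤ × ℤ → Ω → ℂ)
    (hvstar : ∀ j ς, vstar j ς = if ς = ((0 : ℤ), (0 : ℤ), (0 : ℤ)) then vt j else v j ς)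
    (hεstar : ∀ j ς, εstar j ς = if ς = ((0 : ℤ), (0 : ℤ), (0 : ℤ)) then εt j else ε j ς)
    -- the processes, as L^p-convergent series
    (x xstar : ℕ → ℤ × ℤ × ℤ → Ω → ℂ)
    (hx : ∀ ℓ ς, MemLp (x ℓ ς) (ENNReal.ofReal p) μ ∧
      Tendsto (fun F : Finset ((ℤ × ℤ × ℕ) × (Fin q ⊕ ℕ)) =>
        eLpNorm (fun ω => x ℓ ς ω - ∑ t ∈ F,
            Sum.elim (fun j => c ℓ j t.1 * v j (subK ς t.1) ω)
                     (fun j => β ℓ j t.1 * ε j (subK ς t.1) ω) t.2)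
          (ENNReal.ofReal p) μ) atTop (nhds 0))
    (hxstar : ∀ ℓ ς, MemLp (xstar ℓ ς) (ENNReal.ofReal p) μ ∧
      Tendsto (fun F : Finset ((ℤ × ℤ × ℕ) × (Fin q ⊕ ℕ)) =>
        eLpNorm (fun ω => xstar ℓ ς ω - ∑ t ∈ F,
            Sum.elim (fun j => c ℓ j t.1 * vstar j (subK ς t.1) ω)
                     (fun j => β ℓ j t.1 * εstar j (subK ς t.1) ω) t.2)
          (ENNReal.ofReal p) μ) atTop (nhds 0)) :
    (∀ (ℓ : ℕ) (ς : ℤ × ℤ × ℤ), ς.2.2 < 0 → x ℓ ς =ᵐ[μ] xstar ℓ ς) ∧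
    ∃ C > 0, ∀ (ℓ : ℕ) (ς : ℤ × ℤ × ℤ), 0 ≤ ς.2.2 →
      (∫ ω, ‖x ℓ ς ω - xstar ℓ ς ω‖ ^ p ∂μ) ^ (1 / p) ≤
        C * max ρχ₁ ρξ₁ ^ ς.1.natAbs * max ρχ₂ ρξ₂ ^ ς.2.1.natAbs *
          max ρχ₃ ρξ₃ ^ ς.2.2.toNat :=
  stmt_9_general μ q p hp v ε Abar hAbar hv hε c β ρχ₁ ρχ₂ ρχ₃ ρξ₁ ρξ₂ ρξ₃ hρχ₁ hρχ₂ hρχ₃ hρξ₁ hρξ₂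
    hρξ₃ Aχ Aξ hAχpos hAξpos hc hβ AX AXi hAχsum hAξsum vt εt hvt hεt vstar εstar hvstar hεstar x
    xstar hx hxstar

end
end

section
/- There exists a finite constant C > 0, depending only on A^ξ, ρ^ξ₁, ρ^ξ₂ and ρ^ξ₃, such that sup_{θ∈Θ} sup_{n>q} λˣ_{n,q+1}(θ) ≤ C; that is, since Σ^χ_n(θ) has rank at most q, the (q+1)-th largest eigenvalue of the spectral density matrix Σˣ_n(θ) = Σ^χ_n(θ) + Σ^ξ_n(θ) is bounded uniformly over all dimensions n and all frequencies θ. -/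
/-
On the kernel of `Pᴴ`, where `P = (b_{ij}(θ))` has only `q` columns, the common part `P Pᴴ`
vanishes, so there the quadratic form of `Σˣ_n(θ)` is that of the idiosyncratic part. This is the
Gram matrix of the rows of `g`, and `|g_{ij}(θ)| ≤ W A^ξ_{ij}` with
`W = Σ_κ ρ₁^|κ₁| ρ₂^|κ₂| ρ₃^κ₃`; since the weights `A^ξ_{ij}` have row and column sums at most
`A^ξ`, the Schur test bounds that form by `(W A^ξ)² ‖x‖²`. By min-max, a form bounded by `C` on
a subspace of codimension `q` has at most `q` eigenvalues above `C`, so `λ_{q+1} ≤ (W A^ξ)²` for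
all `n` and `θ`.
-/

open Matrix ComplexOrder

noncomputable section

namespace Matrix

variable {𝕜 ι τ κ : Type*} [RCLike 𝕜] [Fintype ι] [Fintype τ] [DecidableEq τ]

lemma re_star_dotProduct_self (x : ι → 𝕜) : RCLike.re (star x ⬝ᵥ x) = ∑ i, ‖x i‖ ^ 2 := by
  simp only [dotProduct, Pi.star_apply, RCLike.star_def, RCLike.conj_mul, map_sum]
  norm_cast

lemma star_mulVec_dotProduct_mulVec_of_conjTranspose_mul_self {V : Matrix ι τ 𝕜}
    (hV : Vᴴ * V = 1) (c w : τ → 𝕜) : star (V *ᵥ c) ⬝ᵥ (V *ᵥ w) = star c ⬝ᵥ w := by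
  rw [star_mulVec, dotProduct_mulVec, vecMul_vecMul, hV, vecMul_one]

lemma re_dotProduct_mulVec_diagonal (d : τ → ℝ) (c : τ → 𝕜) :
    RCLike.re (star c ⬝ᵥ (diagonal (fun t => (d t : 𝕜)) *ᵥ c)) = ∑ t, d t * ‖c t‖ ^ 2 := by
  simp only [dotProduct, Pi.star_apply, RCLike.star_def, map_sum]
  refine Finset.sum_congr rfl fun t _ => ?_
  rw [mulVec_diagonal, mul_left_comm, RCLike.conj_mul]
  norm_cast

-- On the range of `V` the form exceeds `C`, so `F` is injective there: the min-max principle.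
lemma card_le_of_re_dotProduct_mulVec_le [Fintype κ] {A : Matrix ι ι 𝕜}
    {V : Matrix ι τ 𝕜} {d : τ → ℝ} {C : ℝ} (hV : Vᴴ * V = 1)
    (hAV : A * V = V * diagonal (fun t => (d t : 𝕜))) (hd : ∀ t, C < d t)
    (F : (ι → 𝕜) →ₗ[𝕜] (κ → 𝕜))
    (hF : ∀ x, F x = 0 → RCLike.re (star x ⬝ᵥ (A *ᵥ x)) ≤ C * RCLike.re (star x ⬝ᵥ x)) :
    Fintype.card τ ≤ Fintype.card κ := by
  have hinj : Function.Injective (F ∘ₗ V.mulVecLin) := by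
    rw [← LinearMap.ker_eq_bot, LinearMap.ker_eq_bot']
    intro c hc
    have hform := hF (V *ᵥ c) hc
    rw [mulVec_mulVec, hAV, ← mulVec_mulVec,
      star_mulVec_dotProduct_mulVec_of_conjTranspose_mul_self hV,
      star_mulVec_dotProduct_mulVec_of_conjTranspose_mul_self hV, re_dotProduct_mulVec_diagonal,
      re_star_dotProduct_self, Finset.mul_sum, ← sub_nonpos, ← Finset.sum_sub_distrib] at hform
    have hterm : ∀ t ∈ Finset.univ, 0 ≤ d t * ‖c t‖ ^ 2 - C * ‖c t‖ ^ 2 := fun t _ => by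
      rw [← sub_mul]; exact mul_nonneg (sub_pos.2 (hd t)).le (sq_nonneg _)
    have hzero := (Finset.sum_eq_zero_iff_of_nonneg hterm).1
      (le_antisymm hform (Finset.sum_nonneg hterm))
    funext t
    have := hzero t (Finset.mem_univ t)
    rw [← sub_mul, mul_eq_zero] at this
    simpa [(sub_pos.2 (hd t)).ne'] using this
  simpa using LinearMap.finrank_le_finrank_of_injective hinj

lemma IsHermitian.mul_eigenvectorUnitary [DecidableEq ι] {A : Matrix ι ι 𝕜} (hA : A.IsHermitian) :
    A * (hA.eigenvectorUnitary : Matrix ι ι 𝕜) =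
      (hA.eigenvectorUnitary : Matrix ι ι 𝕜) * diagonal (RCLike.ofReal ∘ hA.eigenvalues) := by
  nth_rewrite 1 [hA.spectral_theorem]
  rw [Unitary.conjStarAlgAut_apply, Matrix.mul_assoc, Unitary.coe_star_mul_self, Matrix.mul_one]

lemma IsHermitian.card_eigenvalues_gt_le [DecidableEq ι] [Fintype κ] {A : Matrix ι ι 𝕜}
    (hA : A.IsHermitian) {C : ℝ} (F : (ι → 𝕜) →ₗ[𝕜] (κ → 𝕜))
    (hF : ∀ x, F x = 0 → RCLike.re (star x ⬝ᵥ (A *ᵥ x)) ≤ C * RCLike.re (star x ⬝ᵥ x)) :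
    Fintype.card {i // C < hA.eigenvalues i} ≤ Fintype.card κ := by
  set U : Matrix ι ι 𝕜 := (hA.eigenvectorUnitary : Matrix ι ι 𝕜)
  refine card_le_of_re_dotProduct_mulVec_le (V := U.submatrix id Subtype.val)
    (d := fun t => hA.eigenvalues t) ?_ ?_ (fun t => t.2) F hF
  · rw [conjTranspose_submatrix, ← submatrix_mul _ _ _ _ _ Function.bijective_id,
      ← star_eq_conjTranspose, Unitary.coe_star_mul_self, submatrix_one _ Subtype.val_injective]
  · ext i t
    have h := congrFun₂ hA.mul_eigenvectorUnitary i t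
    rw [mul_diagonal] at h ⊢
    exact h

-- Schur test: `|xᵢ| Kᵢⱼ |xⱼ| ≤ Kᵢⱼ (|xᵢ|² + |xⱼ|²) / 2`, and symmetry of `K` merges the halves.
lemma re_dotProduct_mulVec_le_of_norm_le {G : Matrix ι ι 𝕜} {K : ι → ι → ℝ} {R : ℝ}
    (hGK : ∀ i j, ‖G i j‖ ≤ K i j) (hK : ∀ i j, K i j = K j i) (hrow : ∀ i, ∑ j, K i j ≤ R)
    (x : ι → 𝕜) : RCLike.re (star x ⬝ᵥ (G *ᵥ x)) ≤ R * RCLike.re (star x ⬝ᵥ x) := by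
  have hK0 : ∀ i j, 0 ≤ K i j := fun i j => (norm_nonneg _).trans (hGK i j)
  have hnorm : ‖star x ⬝ᵥ (G *ᵥ x)‖ ≤ ∑ i, ∑ j, K i j * (‖x i‖ * ‖x j‖) := by
    simp only [dotProduct, mulVec, Finset.mul_sum]
    refine (norm_sum_le _ _).trans (Finset.sum_le_sum fun i _ =>
      (norm_sum_le _ _).trans (Finset.sum_le_sum fun j _ => ?_))
    rw [norm_mul, norm_mul, Pi.star_apply, norm_star]
    calc ‖x i‖ * (‖G i j‖ * ‖x j‖) ≤ ‖x i‖ * (K i j * ‖x j‖) := by gcongr; exact hGK i j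
      _ = K i j * (‖x i‖ * ‖x j‖) := by ring
  have hamgm : ∑ i, ∑ j, K i j * (‖x i‖ * ‖x j‖) ≤
      ∑ i, ∑ j, (K i j * ‖x i‖ ^ 2 + K i j * ‖x j‖ ^ 2) / 2 := by
    gcongr with i _ j _
    nlinarith [mul_nonneg (hK0 i j) (sq_nonneg (‖x i‖ - ‖x j‖))]
  have hswap : ∑ i, ∑ j, K i j * ‖x j‖ ^ 2 = ∑ i, ∑ j, K i j * ‖x i‖ ^ 2 := by
    rw [Finset.sum_comm]
    simp_rw [hK]
  have hsymm : ∑ i, ∑ j, (K i j * ‖x i‖ ^ 2 + K i j * ‖x j‖ ^ 2) / 2 =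
      ∑ i, ∑ j, K i j * ‖x i‖ ^ 2 := by
    simp_rw [← Finset.sum_div, Finset.sum_add_distrib, hswap]
    ring
  rw [re_star_dotProduct_self, Finset.mul_sum]
  calc RCLike.re (star x ⬝ᵥ (G *ᵥ x)) ≤ ‖star x ⬝ᵥ (G *ᵥ x)‖ := RCLike.re_le_norm _
    _ ≤ ∑ i, ∑ j, K i j * ‖x i‖ ^ 2 := hsymm ▸ hnorm.trans hamgm
    _ ≤ ∑ i, R * ‖x i‖ ^ 2 := Finset.sum_le_sum fun i _ => by
      rw [← Finset.sum_mul]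
      exact mul_le_mul_of_nonneg_right (hrow i) (sq_nonneg _)

lemma re_dotProduct_gram_mulVec_le {β : Type*} {g : ι → β → 𝕜} {a : ι → β → ℝ} {R : ℝ}
    (hga : ∀ i j, ‖g i j‖ ≤ a i j) (hrow : ∀ i, Summable (a i) ∧ ∑' j, a i j ≤ R)
    (hcol : ∀ j, ∑ i, a i j ≤ R) (x : ι → 𝕜) :
    RCLike.re (star x ⬝ᵥ (of (fun i ℓ => ∑' j, g i j * starRingEnd 𝕜 (g ℓ j)) *ᵥ x)) ≤
      R * R * RCLike.re (star x ⬝ᵥ x) := by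
  have ha0 : ∀ i j, 0 ≤ a i j := fun i j => (norm_nonneg _).trans (hga i j)
  have haR : ∀ i j, a i j ≤ R := fun i j =>
    ((hrow i).1.le_tsum j fun k _ => ha0 i k).trans (hrow i).2
  have hsum : ∀ i ℓ, Summable fun j => a i j * a ℓ j := fun i ℓ =>
    ((hrow i).1.mul_right R).of_nonneg_of_le (fun j => mul_nonneg (ha0 i j) (ha0 ℓ j))
      fun j => mul_le_mul_of_nonneg_left (haR ℓ j) (ha0 i j)
  refine re_dotProduct_mulVec_le_of_norm_le (K := fun i ℓ => ∑' j, a i j * a ℓ j)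
    (fun i ℓ => tsum_of_norm_bounded (hsum i ℓ).hasSum fun j => ?_)
    (fun i ℓ => tsum_congr fun j => mul_comm _ _) (fun i => ?_) x
  · rw [norm_mul, RCLike.norm_conj]
    exact mul_le_mul (hga i j) (hga ℓ j) (norm_nonneg _) (ha0 i j)
  · have hR : 0 ≤ R := (tsum_nonneg (ha0 i)).trans (hrow i).2
    calc ∑ ℓ, ∑' j, a i j * a ℓ j = ∑' j, ∑ ℓ, a i j * a ℓ j :=
          (Summable.tsum_finsetSum fun ℓ _ => hsum i ℓ).symm
      _ ≤ ∑' j, a i j * R :=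
          (summable_sum fun ℓ _ => hsum i ℓ).tsum_le_tsum (fun j => by
            rw [← Finset.mul_sum]
            exact mul_le_mul_of_nonneg_left (hcol j) (ha0 i j)) ((hrow i).1.mul_right R)
      _ ≤ R * R := by
          rw [tsum_mul_right]
          exact mul_le_mul_of_nonneg_right (hrow i).2 hR

end Matrix

lemma List.getD_le_of_countP_add_lt {l : List ℝ} (hl : l.Pairwise (· ≤ ·)) {C : ℝ} {k : ℕ}
    (hk : k < l.length) (hc : l.countP (fun x => decide (C < x)) + k < l.length) :
    l.getD k 0 ≤ C := by
  by_contra! h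
  rw [List.getD_eq_getElem l 0 hk] at h
  have hdrop : ∀ a ∈ l.drop k, C < a := by
    have hsorted := hl.drop (i := k)
    rw [List.drop_eq_getElem_cons hk] at hsorted ⊢
    intro a ha
    rcases List.mem_cons.mp ha with rfl | ha
    · exact h
    · exact h.trans_le ((List.pairwise_cons.mp hsorted).1 a ha)
  have hcount := List.countP_append (l₁ := l.take k) (l₂ := l.drop k)
    (p := fun x => decide (C < x))
  rw [List.take_append_drop, List.countP_eq_length.mpr fun a ha => decide_eq_true (hdrop a ha),
    List.length_drop] at hcount
  omega

lemma eigJ_le_of_card_lt {n j : ℕ} {A : Matrix (Fin n) (Fin n) ℂ} (hA : A.IsHermitian) {C : ℝ}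
    (hj : 0 < j) (hjn : j ≤ n) (hcard : Fintype.card {i // C < hA.eigenvalues i} < j) :
    eigJ A j ≤ C := by
  have hlen : ((Finset.univ.val.map hA.eigenvalues).sort (· ≤ ·)).length = n := by simp
  have hcount : ((Finset.univ.val.map hA.eigenvalues).sort (· ≤ ·)).countP
      (fun x => decide (C < x)) = Fintype.card {i // C < hA.eigenvalues i} := by
    rw [← Multiset.coe_countP (fun x => C < x), Multiset.sort_eq, Multiset.countP_map,
      Fintype.card_subtype, Finset.card_def, Finset.filter_val]
  rw [eigJ, dif_pos hA]
  exact List.getD_le_of_countP_add_lt (Multiset.pairwise_sort _ _) (by omega) (by omega)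

lemma eigJ_succ_le {n q : ℕ} (A : Matrix (Fin n) (Fin n) ℂ) {C : ℝ} (hC : 0 ≤ C) (hqn : q < n)
    (F : (Fin n → ℂ) →ₗ[ℂ] (Fin q → ℂ))
    (hF : ∀ x, F x = 0 → (star x ⬝ᵥ (A *ᵥ x)).re ≤ C * (star x ⬝ᵥ x).re) :
    eigJ A (q + 1) ≤ C := by
  by_cases hA : A.IsHermitian
  · have hcard := hA.card_eigenvalues_gt_le F hF
    rw [Fintype.card_fin] at hcard
    exact eigJ_le_of_card_lt hA q.succ_pos hqn (by omega)
  · rw [eigJ, dif_neg hA]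
    exact hC

lemma eigJ_mul_conjTranspose_add_gram_le {n q : ℕ} {β : Type*} (P : Matrix (Fin n) (Fin q) ℂ)
    {g : Fin n → β → ℂ} {a : Fin n → β → ℝ} {R : ℝ} (hqn : q < n)
    (hga : ∀ i j, ‖g i j‖ ≤ a i j) (hrow : ∀ i, Summable (a i) ∧ ∑' j, a i j ≤ R)
    (hcol : ∀ j, ∑ i, a i j ≤ R) :
    eigJ (P * Pᴴ + of fun i ℓ => ∑' j, g i j * starRingEnd ℂ (g ℓ j)) (q + 1) ≤ R * R := by
  refine eigJ_succ_le _ (mul_self_nonneg R) hqn Pᴴ.mulVecLin fun x hx => ?_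
  rw [add_mulVec, ← mulVec_mulVec, show Pᴴ *ᵥ x = 0 from hx, mulVec_zero, zero_add]
  exact re_dotProduct_gram_mulVec_le hga hrow hcol x

lemma summable_pow_natAbs_s17 {ρ : ℝ} (h₀ : 0 ≤ ρ) (h₁ : ρ < 1) :
    Summable fun k : ℤ => ρ ^ k.natAbs := by
  apply Summable.of_nat_of_neg <;> simpa using summable_geometric_of_lt_one h₀ h₁

lemma summable_geometric_weight {ρ₁ ρ₂ ρ₃ : ℝ} (h₁ : ρ₁ ∈ Set.Ico (0 : ℝ) 1)
    (h₂ : ρ₂ ∈ Set.Ico (0 : ℝ) 1) (h₃ : ρ₃ ∈ Set.Ico (0 : ℝ) 1) :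
    Summable fun κ : ℤ × ℤ × ℕ => ρ₁ ^ κ.1.natAbs * ρ₂ ^ κ.2.1.natAbs * ρ₃ ^ κ.2.2 := by
  have h₂₃ : Summable fun p : ℤ × ℕ => ρ₂ ^ p.1.natAbs * ρ₃ ^ p.2 :=
    (summable_pow_natAbs_s17 h₂.1 h₂.2).mul_of_nonneg (summable_geometric_of_lt_one h₃.1 h₃.2)
      (fun _ => pow_nonneg h₂.1 _) fun _ => pow_nonneg h₃.1 _
  simpa only [mul_assoc] using (summable_pow_natAbs_s17 h₁.1 h₁.2).mul_of_nonneg h₂₃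
    (fun _ => pow_nonneg h₁.1 _) fun _ => mul_nonneg (pow_nonneg h₂.1 _) (pow_nonneg h₃.1 _)

lemma norm_tsum_mul_exp_le {α : Type*} {β : α → ℂ} {w : α → ℝ} {A W : ℝ} (t : α → ℝ)
    (hβ : ∀ κ, ‖β κ‖ ≤ A * w κ) (hw : HasSum w W) :
    ‖∑' κ, β κ * Complex.exp (-(Complex.I * t κ))‖ ≤ A * W :=
  tsum_of_norm_bounded (hw.mul_left A) fun κ => by
    rw [norm_mul, Complex.norm_exp]
    simpa using hβ κ

theorem stmt_17_general (q : ℕ)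
    (β : ℕ → ℕ → ℤ × ℤ × ℕ → ℂ)
    (ρξ₁ ρξ₂ ρξ₃ : ℝ)
    (hρξ₁ : ρξ₁ ∈ Set.Ioo (0 : ℝ) 1)
    (hρξ₂ : ρξ₂ ∈ Set.Ioo (0 : ℝ) 1) (hρξ₃ : ρξ₃ ∈ Set.Ioo (0 : ℝ) 1)
    (Aξ : ℕ → ℕ → ℝ)
    (hAξpos : ∀ ℓ j, 0 < Aξ ℓ j)
    (hβ : ∀ ℓ j κ, ‖β ℓ j κ‖ ≤ Aξ ℓ j * ρξ₁ ^ κ.1.natAbs * ρξ₂ ^ κ.2.1.natAbs * ρξ₃ ^ κ.2.2)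
    (AXi : ℝ)
    (hAξrow : ∀ ℓ, Summable (Aξ ℓ) ∧ ∑' j, Aξ ℓ j ≤ AXi)
    (hAξcol : ∀ j, Summable (fun ℓ => Aξ ℓ j) ∧ ∑' ℓ, Aξ ℓ j ≤ AXi)
    (bχ : ℕ → Fin q → (Fin 3 → ℝ) → ℂ) (g : ℕ → ℕ → (Fin 3 → ℝ) → ℂ)
    (hg : ∀ ℓ j θ, g ℓ j θ =
      ∑' κ : ℤ × ℤ × ℕ, β ℓ j κ * Complex.exp (-(Complex.I * (kdot κ θ : ℝ)))) :
    ∃ C > 0, ∀ θ ∈ Theta, ∀ n : ℕ, q < n →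
      eigJ (Matrix.of fun i ℓ : Fin n =>
        (∑ j : Fin q, bχ (i : ℕ) j θ * (starRingEnd ℂ) (bχ (ℓ : ℕ) j θ)) +
        (∑' j : ℕ, g (i : ℕ) j θ * (starRingEnd ℂ) (g (ℓ : ℕ) j θ))) (q + 1) ≤ C := by
  obtain ⟨W, hW⟩ := summable_geometric_weight (Set.Ioo_subset_Ico_self hρξ₁)
    (Set.Ioo_subset_Ico_self hρξ₂) (Set.Ioo_subset_Ico_self hρξ₃)
  have hW₀ : 0 ≤ W := hW.nonneg fun κ => mul_nonneg
    (mul_nonneg (pow_nonneg hρξ₁.1.le _) (pow_nonneg hρξ₂.1.le _)) (pow_nonneg hρξ₃.1.le _)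
  refine ⟨(W * AXi) ^ 2 + 1, by positivity, fun θ _ n hqn => ?_⟩
  have hM : of (fun i ℓ : Fin n => (∑ j : Fin q, bχ i j θ * starRingEnd ℂ (bχ ℓ j θ)) +
      ∑' j, g i j θ * starRingEnd ℂ (g ℓ j θ)) =
      of (fun (i : Fin n) j => bχ i j θ) * (of fun (i : Fin n) j => bχ i j θ)ᴴ +
        of fun i ℓ : Fin n => ∑' j, g i j θ * starRingEnd ℂ (g ℓ j θ) := by
    ext i ℓ
    simp [mul_apply]
  rw [hM]
  refine (eigJ_mul_conjTranspose_add_gram_le _ hqn (a := fun (i : Fin n) j => W * Aξ i j)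
    (R := W * AXi)
    (fun i j => ?_) (fun i => ⟨(hAξrow i).1.mul_left W, ?_⟩) (fun j => ?_)).trans (by nlinarith)
  · rw [hg, mul_comm W]
    exact norm_tsum_mul_exp_le _ (fun κ => (hβ i j κ).trans_eq (by ring)) hW
  · rw [tsum_mul_left]
    exact mul_le_mul_of_nonneg_left (hAξrow i).2 hW₀
  · rw [← Finset.mul_sum, Fin.sum_univ_eq_sum_range (fun i => Aξ i j)]
    exact mul_le_mul_of_nonneg_left (((hAξcol j).1.sum_le_tsum _
      fun i _ => (hAξpos i j).le).trans (hAξcol j).2) hW₀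

/-- with `Σˣ_n(θ) = Σ^χ_n(θ) + Σ^ξ_n(θ)`, where the rank-≤q common part
`Σ^χ_n(θ)` has entries `Σ_{j≤q} b_{ij}(θ) conj(b_{ℓj}(θ))` and the idiosyncratic part
`Σ^ξ_n(θ)` has entries `Σ_{j∈ℕ} g_{ij}(θ) conj(g_{ℓj}(θ))` built from geometrically
bounded filter coefficients, the `(q+1)`-th largest eigenvalue of `Σˣ_n(θ)` is bounded
by a constant `C` (depending only on `A^ξ, ρ^ξ₁, ρ^ξ₂, ρ^ξ₃`) uniformly over all
dimensions `n > q` and all frequencies `θ ∈ Θ`. -/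
theorem stmt_17 (q : ℕ)
    (c : ℕ → Fin q → ℤ × ℤ × ℕ → ℂ) (β : ℕ → ℕ → ℤ × ℤ × ℕ → ℂ)
    (ρχ₁ ρχ₂ ρχ₃ ρξ₁ ρξ₂ ρξ₃ : ℝ)
    (hρχ₁ : ρχ₁ ∈ Set.Ioo (0 : ℝ) 1) (hρχ₂ : ρχ₂ ∈ Set.Ioo (0 : ℝ) 1)
    (hρχ₃ : ρχ₃ ∈ Set.Ioo (0 : ℝ) 1) (hρξ₁ : ρξ₁ ∈ Set.Ioo (0 : ℝ) 1)
    (hρξ₂ : ρξ₂ ∈ Set.Ioo (0 : ℝ) 1) (hρξ₃ : ρξ₃ ∈ Set.Ioo (0 : ℝ) 1)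
    (Aχ : ℕ → Fin q → ℝ) (Aξ : ℕ → ℕ → ℝ)
    (hAχpos : ∀ ℓ j, 0 < Aχ ℓ j) (hAξpos : ∀ ℓ j, 0 < Aξ ℓ j)
    (hc : ∀ ℓ j κ, ‖c ℓ j κ‖ ≤ Aχ ℓ j * ρχ₁ ^ κ.1.natAbs * ρχ₂ ^ κ.2.1.natAbs * ρχ₃ ^ κ.2.2)
    (hβ : ∀ ℓ j κ, ‖β ℓ j κ‖ ≤ Aξ ℓ j * ρξ₁ ^ κ.1.natAbs * ρξ₂ ^ κ.2.1.natAbs * ρξ₃ ^ κ.2.2)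
    (AX AXi : ℝ)
    (hAχsum : ∀ ℓ, ∑ j, Aχ ℓ j ≤ AX)
    (hAξrow : ∀ ℓ, Summable (Aξ ℓ) ∧ ∑' j, Aξ ℓ j ≤ AXi)
    (hAξcol : ∀ j, Summable (fun ℓ => Aξ ℓ j) ∧ ∑' ℓ, Aξ ℓ j ≤ AXi)
    (bχ : ℕ → Fin q → (Fin 3 → ℝ) → ℂ) (g : ℕ → ℕ → (Fin 3 → ℝ) → ℂ)
    (hbχ : ∀ ℓ j θ, bχ ℓ j θ =
      ∑' κ : ℤ × ℤ × ℕ, c ℓ j κ * Complex.exp (-(Complex.I * (kdot κ θ : ℝ))))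
    (hg : ∀ ℓ j θ, g ℓ j θ =
      ∑' κ : ℤ × ℤ × ℕ, β ℓ j κ * Complex.exp (-(Complex.I * (kdot κ θ : ℝ)))) :
    ∃ C > 0, ∀ θ ∈ Theta, ∀ n : ℕ, q < n →
      eigJ (Matrix.of fun i ℓ : Fin n =>
        (∑ j : Fin q, bχ (i : ℕ) j θ * (starRingEnd ℂ) (bχ (ℓ : ℕ) j θ)) +
        (∑' j : ℕ, g (i : ℕ) j θ * (starRingEnd ℂ) (g (ℓ : ℕ) j θ))) (q + 1) ≤ C :=
  stmt_17_general q β ρξ₁ ρξ₂ ρξ₃ hρξ₁ hρξ₂ hρξ₃ Aξ hAξpos hβ AXi hAξrow hAξcol bχ g hg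

end
end
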